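/- For any $V_1, V_2, V_3 \in \mathbb{O}_{p,R}$, the $\sin\Theta$ distances satisfy the triangle inequality: $\|\sin\Theta(V_2, V_3)\|_{op} \leq \|\sin\Theta(V_1, V_2)\|_{op} + \|\sin\Theta(V_1, V_3)\|_{op}$, and the same inequality holds in Frobenius norm. -/

import Mathlib

noncomputable section
open Matrix

/-- Smallest singular value of a square matrix:
`σ_min(W) = inf {‖W x‖ : ‖x‖ = 1}`. -/
def sigmaMin {R : ℕ} (W : Matrix (Fin R) (Fin R) ℝ) : ℝ :=
  sInf ((fun x : EuclideanSpace ℝ (Fin R) => ‖Matrix.toEuclideanLin W x‖) ''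
    {x : EuclideanSpace ℝ (Fin R) | ‖x‖ = 1})

/-- `‖sin Θ(U, V)‖_op = √(1 - σ_min²(Uᵀ V))`. -/
def sinThetaOp {p R : ℕ} (U V : Matrix (Fin p) (Fin R) ℝ) : ℝ :=
  Real.sqrt (1 - sigmaMin (Uᵀ * V) ^ 2)

/-- `‖sin Θ(U, V)‖_F = √(R - ‖Uᵀ V‖_F²)`. -/
def sinThetaF {p R : ℕ} (U V : Matrix (Fin p) (Fin R) ℝ) : ℝ :=
  Real.sqrt ((R : ℝ) - ∑ i, ∑ j, ((Uᵀ * V) i j) ^ 2)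

/-! ### Auxiliary lemmas -/

section Aux

variable {p R : ℕ}

lemma toEL_mul {m n k : ℕ} (A : Matrix (Fin m) (Fin n) ℝ) (B : Matrix (Fin n) (Fin k) ℝ)
    (x : EuclideanSpace ℝ (Fin k)) :
    Matrix.toEuclideanLin (A * B) x = Matrix.toEuclideanLin A (Matrix.toEuclideanLin B x) := by
  simp [Matrix.toEuclideanLin_apply, Matrix.mulVec_mulVec]

lemma toEL_one (x : EuclideanSpace ℝ (Fin R)) :
    Matrix.toEuclideanLin (1 : Matrix (Fin R) (Fin R) ℝ) x = x := by
  simp [Matrix.toEuclideanLin_apply]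

lemma toEL_adj (A : Matrix (Fin p) (Fin R) ℝ) (z : EuclideanSpace ℝ (Fin p))
    (w : EuclideanSpace ℝ (Fin R)) :
    inner ℝ (Matrix.toEuclideanLin Aᵀ z) w = (inner ℝ z (Matrix.toEuclideanLin A w) : ℝ) := by
  have h : Aᵀ = Aᴴ := by ext i j; simp [Matrix.conjTranspose_apply]
  rw [h, Matrix.toEuclideanLin_conjTranspose_eq_adjoint, LinearMap.adjoint_inner_left]

-- G1 : isometry
lemma G1 (U : Matrix (Fin p) (Fin R) ℝ) (hU : Uᵀ * U = 1) (y : EuclideanSpace ℝ (Fin R)) :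
    ‖Matrix.toEuclideanLin U y‖ = ‖y‖ := by
  have h1 : (inner ℝ (Matrix.toEuclideanLin U y) (Matrix.toEuclideanLin U y) : ℝ)
      = inner ℝ y y := by
    rw [← toEL_adj, ← toEL_mul, hU, toEL_one]
  have := congrArg Real.sqrt h1
  rwa [real_inner_self_eq_norm_sq, real_inner_self_eq_norm_sq,
    Real.sqrt_sq (norm_nonneg _), Real.sqrt_sq (norm_nonneg _)] at this

-- G2 : contraction of transpose
lemma G2 (U : Matrix (Fin p) (Fin R) ℝ) (hU : Uᵀ * U = 1) (z : EuclideanSpace ℝ (Fin p)) :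
    ‖Matrix.toEuclideanLin Uᵀ z‖ ≤ ‖z‖ := by
  have h1 : ‖Matrix.toEuclideanLin Uᵀ z‖ ^ 2
      ≤ ‖z‖ * ‖Matrix.toEuclideanLin Uᵀ z‖ := by
    rw [← real_inner_self_eq_norm_sq, toEL_adj]
    calc (inner ℝ z (Matrix.toEuclideanLin U (Matrix.toEuclideanLin Uᵀ z)) : ℝ)
        ≤ ‖z‖ * ‖Matrix.toEuclideanLin U (Matrix.toEuclideanLin Uᵀ z)‖ := real_inner_le_norm _ _
      _ = ‖z‖ * ‖Matrix.toEuclideanLin Uᵀ z‖ := by rw [G1 U hU]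
  by_cases h : ‖Matrix.toEuclideanLin Uᵀ z‖ = 0
  · rw [h]; exact norm_nonneg _
  · have hpos : 0 < ‖Matrix.toEuclideanLin Uᵀ z‖ := lt_of_le_of_ne (norm_nonneg _) (Ne.symm h)
    nlinarith

-- G3 : Pythagoras
lemma G3 (U : Matrix (Fin p) (Fin R) ℝ) (hU : Uᵀ * U = 1) (z : EuclideanSpace ℝ (Fin p)) :
    ‖z - Matrix.toEuclideanLin U (Matrix.toEuclideanLin Uᵀ z)‖ ^ 2
      = ‖z‖ ^ 2 - ‖Matrix.toEuclideanLin Uᵀ z‖ ^ 2 := by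
  have hin : (inner ℝ z (Matrix.toEuclideanLin U (Matrix.toEuclideanLin Uᵀ z)) : ℝ)
      = ‖Matrix.toEuclideanLin Uᵀ z‖ ^ 2 := by
    rw [← toEL_adj, real_inner_self_eq_norm_sq]
  have hn : ‖Matrix.toEuclideanLin U (Matrix.toEuclideanLin Uᵀ z)‖
      = ‖Matrix.toEuclideanLin Uᵀ z‖ := G1 U hU _
  rw [norm_sub_sq_real, hin, hn]
  ring

lemma sigmaMin_nonneg (W : Matrix (Fin R) (Fin R) ℝ) : 0 ≤ sigmaMin W := by
  apply Real.sInf_nonneg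
  rintro b ⟨z, _, rfl⟩; exact norm_nonneg _

lemma sigmaMin_le (W : Matrix (Fin R) (Fin R) ℝ) (x : EuclideanSpace ℝ (Fin R))
    (hx : ‖x‖ = 1) : sigmaMin W ≤ ‖Matrix.toEuclideanLin W x‖ :=
  csInf_le ⟨0, by rintro b ⟨z, _, rfl⟩; exact norm_nonneg _⟩ ⟨x, hx, rfl⟩

lemma aux_adjoint_sInf_le (T : EuclideanSpace ℝ (Fin R) →ₗ[ℝ] EuclideanSpace ℝ (Fin R)) :
    sInf ((fun x : EuclideanSpace ℝ (Fin R) => ‖T x‖) ''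
        {x : EuclideanSpace ℝ (Fin R) | ‖x‖ = 1})
      ≤ sInf ((fun x : EuclideanSpace ℝ (Fin R) => ‖LinearMap.adjoint T x‖) ''
        {x : EuclideanSpace ℝ (Fin R) | ‖x‖ = 1}) := by
  set S : Set (EuclideanSpace ℝ (Fin R)) := {x | ‖x‖ = 1}
  by_cases hS : S.Nonempty
  · by_cases hinj : Function.Injective T
    · have hsurj : Function.Surjective T := LinearMap.injective_iff_surjective.mp hinj
      apply le_csInf (hS.image _)
      rintro b ⟨x, hx, rfl⟩
      obtain ⟨y, hy⟩ := hsurj x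
      have hx1 : ‖x‖ = 1 := hx
      have hy0 : y ≠ 0 := by
        rintro rfl
        simp at hy
        rw [← hy] at hx1
        simp at hx1
      have hyn : 0 < ‖y‖ := norm_pos_iff.mpr hy0
      set u : EuclideanSpace ℝ (Fin R) := ‖y‖⁻¹ • y with hu
      have hu1 : ‖u‖ = 1 := by
        rw [hu, norm_smul, norm_inv, norm_norm, inv_mul_cancel₀ (ne_of_gt hyn)]
      have hTu : T u = ‖y‖⁻¹ • x := by rw [hu, _root_.map_smul, hy]
      have hTun : ‖T u‖ = ‖y‖⁻¹ := by
        rw [hTu, norm_smul, norm_inv, norm_norm, hx1, mul_one]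
      have h1 : sInf ((fun x : EuclideanSpace ℝ (Fin R) => ‖T x‖) '' S) ≤ ‖y‖⁻¹ := by
        rw [← hTun]
        exact csInf_le ⟨0, by rintro b ⟨z, _, rfl⟩; exact norm_nonneg _⟩ ⟨u, hu1, rfl⟩
      have h2 : ‖y‖⁻¹ ≤ ‖LinearMap.adjoint T x‖ := by
        have hadj : (inner ℝ (LinearMap.adjoint T x) u : ℝ) = inner ℝ x (T u) :=
          LinearMap.adjoint_inner_left _ _ _
        have h3 : (inner ℝ x (T u) : ℝ) = ‖y‖⁻¹ := by
          rw [hTu, real_inner_smul_right, real_inner_self_eq_norm_sq, hx1]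
          norm_num
        calc ‖y‖⁻¹ = (inner ℝ (LinearMap.adjoint T x) u : ℝ) := by rw [hadj, h3]
          _ ≤ ‖LinearMap.adjoint T x‖ * ‖u‖ := real_inner_le_norm _ _
          _ = ‖LinearMap.adjoint T x‖ := by rw [hu1, mul_one]
      exact h1.trans h2
    · obtain ⟨y, hy0, hTy⟩ : ∃ y : EuclideanSpace ℝ (Fin R), y ≠ 0 ∧ T y = 0 := by
        rw [Function.not_injective_iff] at hinj
        obtain ⟨a, b, hab, hne⟩ := hinj
        exact ⟨a - b, sub_ne_zero.mpr hne, by rw [map_sub, hab, sub_self]⟩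
      have hyn : 0 < ‖y‖ := norm_pos_iff.mpr hy0
      set u : EuclideanSpace ℝ (Fin R) := ‖y‖⁻¹ • y with hu
      have hu1 : ‖u‖ = 1 := by
        rw [hu, norm_smul, norm_inv, norm_norm, inv_mul_cancel₀ (ne_of_gt hyn)]
      have hTu : ‖T u‖ = 0 := by rw [hu, _root_.map_smul, hTy, smul_zero, norm_zero]
      have h1 : sInf ((fun x : EuclideanSpace ℝ (Fin R) => ‖T x‖) '' S) ≤ 0 := by
        rw [← hTu]
        exact csInf_le ⟨0, by rintro b ⟨z, _, rfl⟩; exact norm_nonneg _⟩ ⟨u, hu1, rfl⟩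
      refine h1.trans (Real.sInf_nonneg ?_)
      rintro b ⟨z, _, rfl⟩; exact norm_nonneg _
  · have : S = ∅ := Set.not_nonempty_iff_eq_empty.mp hS
    simp [this]

/-- σ_min is invariant under transpose. -/
lemma sigmaMin_transpose (W : Matrix (Fin R) (Fin R) ℝ) : sigmaMin Wᵀ = sigmaMin W := by
  have hWt : Wᵀ = Wᴴ := by ext i j; simp [Matrix.conjTranspose_apply]
  have hadj : Matrix.toEuclideanLin Wᵀ = LinearMap.adjoint (Matrix.toEuclideanLin W) := by
    rw [hWt, Matrix.toEuclideanLin_conjTranspose_eq_adjoint]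
  unfold sigmaMin
  rw [hadj]
  apply le_antisymm
  · have := aux_adjoint_sInf_le (LinearMap.adjoint (Matrix.toEuclideanLin W))
    rwa [LinearMap.adjoint_adjoint] at this
  · exact aux_adjoint_sInf_le (Matrix.toEuclideanLin W)

end Aux

section OpPart

variable {p R : ℕ}

local notation "L" => Matrix.toEuclideanLin

lemma sigmaMin_le_one (hR : 0 < R) (U V : Matrix (Fin p) (Fin R) ℝ)
    (hU : Uᵀ * U = 1) (hV : Vᵀ * V = 1) : sigmaMin (Uᵀ * V) ≤ 1 := by
  set x₀ : EuclideanSpace ℝ (Fin R) := EuclideanSpace.single ⟨0, hR⟩ (1 : ℝ) with hx₀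
  have hx₀1 : ‖x₀‖ = 1 := by rw [hx₀, EuclideanSpace.norm_single]; norm_num
  calc sigmaMin (Uᵀ * V) ≤ ‖L (Uᵀ * V) x₀‖ := sigmaMin_le _ _ hx₀1
    _ = ‖L Uᵀ (L V x₀)‖ := by rw [toEL_mul]
    _ ≤ ‖L V x₀‖ := G2 U hU _
    _ = 1 := by rw [G1 V hV, hx₀1]

set_option maxHeartbeats 2000000 in
lemma pointwise_bound (hR : 0 < R) (V₁ V₂ V₃ : Matrix (Fin p) (Fin R) ℝ)
    (hV₁ : V₁ᵀ * V₁ = 1) (hV₂ : V₂ᵀ * V₂ = 1) (hV₃ : V₃ᵀ * V₃ = 1)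
    (x : EuclideanSpace ℝ (Fin R)) (hx : ‖x‖ = 1) :
    1 - ‖L (V₂ᵀ * V₃) x‖ ^ 2
      ≤ (Real.sqrt (1 - sigmaMin (V₂ᵀ * V₁) ^ 2)
          + Real.sqrt (1 - sigmaMin (V₁ᵀ * V₃) ^ 2)) ^ 2 := by
  set b := sigmaMin (V₂ᵀ * V₁) with hb
  set c := sigmaMin (V₁ᵀ * V₃) with hc
  have hb0 : 0 ≤ b := sigmaMin_nonneg _
  have hc0 : 0 ≤ c := sigmaMin_nonneg _
  have hb1 : b ≤ 1 := sigmaMin_le_one hR V₂ V₁ hV₂ hV₁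
  have hc1 : c ≤ 1 := sigmaMin_le_one hR V₁ V₃ hV₁ hV₃
  set z : EuclideanSpace ℝ (Fin p) := L V₃ x with hz
  have hz1 : ‖z‖ = 1 := by rw [hz, G1 V₃ hV₃, hx]
  set w : EuclideanSpace ℝ (Fin R) := L V₁ᵀ z with hw
  have hw1 : ‖w‖ ≤ 1 := by rw [hw]; exact (G2 V₁ hV₁ z).trans_eq hz1
  -- decomposition
  have hdec : z - L V₂ (L V₂ᵀ z)
      = (L V₁ w - L V₂ (L V₂ᵀ (L V₁ w)))
        + ((z - L V₁ w) - L V₂ (L V₂ᵀ (z - L V₁ w))) := by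
    simp only [map_sub]
    abel
  -- term 1
  have hterm1 : ‖L V₁ w - L V₂ (L V₂ᵀ (L V₁ w))‖ ≤ Real.sqrt (1 - b ^ 2) := by
    have e1 : ‖L V₁ w - L V₂ (L V₂ᵀ (L V₁ w))‖ ^ 2
        = ‖w‖ ^ 2 - ‖L (V₂ᵀ * V₁) w‖ ^ 2 := by
      rw [G3 V₂ hV₂ (L V₁ w), G1 V₁ hV₁, toEL_mul]
    have hbw : b * ‖w‖ ≤ ‖L (V₂ᵀ * V₁) w‖ := by
      by_cases hw0 : w = 0
      · simp [hw0]
      · have hwn : 0 < ‖w‖ := norm_pos_iff.mpr hw0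
        have hu1 : ‖(‖w‖⁻¹ • w : EuclideanSpace ℝ (Fin R))‖ = 1 := by
          rw [norm_smul, norm_inv, norm_norm, inv_mul_cancel₀ (ne_of_gt hwn)]
        have := sigmaMin_le (V₂ᵀ * V₁) _ hu1
        rw [_root_.map_smul, norm_smul, norm_inv, norm_norm] at this
        calc b * ‖w‖ ≤ (‖w‖⁻¹ * ‖L (V₂ᵀ * V₁) w‖) * ‖w‖ :=
              mul_le_mul_of_nonneg_right this (le_of_lt hwn)
          _ = ‖L (V₂ᵀ * V₁) w‖ := by field_simp
    have e2 : ‖L V₁ w - L V₂ (L V₂ᵀ (L V₁ w))‖ ^ 2 ≤ 1 - b ^ 2 := by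
      have h1 : (b * ‖w‖) ^ 2 ≤ ‖L (V₂ᵀ * V₁) w‖ ^ 2 :=
        pow_le_pow_left₀ (by positivity) hbw 2
      have h2 : ‖w‖ ^ 2 ≤ 1 := by nlinarith [norm_nonneg w]
      have hb2 : b ^ 2 ≤ 1 := by nlinarith
      have hkey : ‖w‖ ^ 2 - (b * ‖w‖) ^ 2 ≤ 1 - b ^ 2 := by
        nlinarith [mul_nonneg (sub_nonneg.mpr hb2) (sub_nonneg.mpr h2)]
      linarith [e1.le, h1, hkey, e1.ge]
    rw [← Real.sqrt_sq (norm_nonneg (L V₁ w - L V₂ (L V₂ᵀ (L V₁ w))))]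
    exact Real.sqrt_le_sqrt e2
  -- term 2
  have hterm2 : ‖(z - L V₁ w) - L V₂ (L V₂ᵀ (z - L V₁ w))‖ ≤ Real.sqrt (1 - c ^ 2) := by
    have e1 : ‖(z - L V₁ w) - L V₂ (L V₂ᵀ (z - L V₁ w))‖ ^ 2 ≤ ‖z - L V₁ w‖ ^ 2 := by
      rw [G3 V₂ hV₂ (z - L V₁ w)]
      nlinarith [norm_nonneg (L V₂ᵀ (z - L V₁ w))]
    have e2 : ‖z - L V₁ w‖ ^ 2 = 1 - ‖L (V₁ᵀ * V₃) x‖ ^ 2 := by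
      rw [hw, G3 V₁ hV₁ z, hz1, ← toEL_mul]
      norm_num
    have e3 : c ^ 2 ≤ ‖L (V₁ᵀ * V₃) x‖ ^ 2 :=
      pow_le_pow_left₀ hc0 (sigmaMin_le _ _ hx) 2
    have : ‖(z - L V₁ w) - L V₂ (L V₂ᵀ (z - L V₁ w))‖ ^ 2 ≤ 1 - c ^ 2 := by
      rw [e2] at e1; nlinarith
    rw [← Real.sqrt_sq (norm_nonneg ((z - L V₁ w) - L V₂ (L V₂ᵀ (z - L V₁ w))))]
    exact Real.sqrt_le_sqrt this
  -- combine
  have htot : ‖z - L V₂ (L V₂ᵀ z)‖ ≤ Real.sqrt (1 - b ^ 2) + Real.sqrt (1 - c ^ 2) := by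
    rw [hdec]
    exact (norm_add_le _ _).trans (add_le_add hterm1 hterm2)
  have hlhs : ‖z - L V₂ (L V₂ᵀ z)‖ ^ 2 = 1 - ‖L (V₂ᵀ * V₃) x‖ ^ 2 := by
    rw [G3 V₂ hV₂ z, hz1, hz, ← toEL_mul]
    norm_num
  rw [← hlhs]
  exact pow_le_pow_left₀ (norm_nonneg _) htot 2

set_option maxHeartbeats 1000000 in
lemma opTriangle (hR : 0 < R) (V₁ V₂ V₃ : Matrix (Fin p) (Fin R) ℝ)
    (hV₁ : V₁ᵀ * V₁ = 1) (hV₂ : V₂ᵀ * V₂ = 1) (hV₃ : V₃ᵀ * V₃ = 1) :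
    sinThetaOp V₂ V₃ ≤ sinThetaOp V₁ V₂ + sinThetaOp V₁ V₃ := by
  have hsym : sigmaMin (V₁ᵀ * V₂) = sigmaMin (V₂ᵀ * V₁) := by
    rw [← sigmaMin_transpose (V₁ᵀ * V₂), Matrix.transpose_mul, Matrix.transpose_transpose]
  set a := sigmaMin (V₂ᵀ * V₃) with ha
  set b := sigmaMin (V₂ᵀ * V₁) with hb
  set c := sigmaMin (V₁ᵀ * V₃) with hc
  have ha0 : 0 ≤ a := sigmaMin_nonneg _
  unfold sinThetaOp
  rw [hsym]
  set S := Real.sqrt (1 - b ^ 2) + Real.sqrt (1 - c ^ 2) with hS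
  have hS0 : 0 ≤ S := by positivity
  have hkey : 1 - a ^ 2 ≤ S ^ 2 := by
    by_cases hcase : 1 - S ^ 2 ≤ 0
    · nlinarith
    · push_neg at hcase
      set t := Real.sqrt (1 - S ^ 2) with ht
      have ht0 : 0 ≤ t := Real.sqrt_nonneg _
      have hat : t ≤ a := by
        rw [ha]
        unfold sigmaMin
        apply le_csInf
        · refine Set.Nonempty.image _ ⟨EuclideanSpace.single ⟨0, hR⟩ (1 : ℝ), ?_⟩
          show ‖_‖ = 1
          rw [EuclideanSpace.norm_single]; norm_num
        · rintro r ⟨x, hx, rfl⟩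
          have hpb := pointwise_bound hR V₁ V₂ V₃ hV₁ hV₂ hV₃ x hx
          have h2 : t ^ 2 ≤ ‖Matrix.toEuclideanLin (V₂ᵀ * V₃) x‖ ^ 2 := by
            rw [ht, Real.sq_sqrt (le_of_lt hcase)]
            nlinarith
          calc t = Real.sqrt (t ^ 2) := (Real.sqrt_sq ht0).symm
            _ ≤ Real.sqrt (‖Matrix.toEuclideanLin (V₂ᵀ * V₃) x‖ ^ 2) := Real.sqrt_le_sqrt h2
            _ = ‖Matrix.toEuclideanLin (V₂ᵀ * V₃) x‖ := Real.sqrt_sq (norm_nonneg _)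
      have ht2 : t ^ 2 = 1 - S ^ 2 := Real.sq_sqrt (le_of_lt hcase)
      nlinarith
  calc Real.sqrt (1 - a ^ 2) ≤ Real.sqrt (S ^ 2) := Real.sqrt_le_sqrt hkey
    _ = S := Real.sqrt_sq hS0

lemma sigmaMin_zero_of_R_eq_zero (W : Matrix (Fin 0) (Fin 0) ℝ) : sigmaMin W = 0 := by
  unfold sigmaMin
  have : {x : EuclideanSpace ℝ (Fin 0) | ‖x‖ = 1} = ∅ := by
    ext x
    simp only [Set.mem_setOf_eq, Set.mem_empty_iff_false, iff_false]
    have : x = 0 := Subsingleton.elim _ _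
    rw [this]
    simp
  rw [this]
  simp

end OpPart

section FrobPart

variable {p R : ℕ}

lemma trace_mul_transpose_self (M : Matrix (Fin p) (Fin p) ℝ) :
    Matrix.trace (M * Mᵀ) = ∑ i, ∑ j, (M i j) ^ 2 := by
  simp [Matrix.trace, Matrix.mul_apply, Matrix.diag, sq]

lemma frob_key (U V : Matrix (Fin p) (Fin R) ℝ) (hU : Uᵀ * U = 1) (hV : Vᵀ * V = 1) :
    ∑ i, ∑ j, ((U * Uᵀ - V * Vᵀ) i j) ^ 2
      = 2 * ((R : ℝ) - ∑ i, ∑ j, ((Uᵀ * V) i j) ^ 2) := by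
  have hDt : (U * Uᵀ - V * Vᵀ)ᵀ = U * Uᵀ - V * Vᵀ := by
    simp [Matrix.transpose_sub, Matrix.transpose_mul]
  have h1 : ∑ i, ∑ j, ((U * Uᵀ - V * Vᵀ) i j) ^ 2
      = Matrix.trace ((U * Uᵀ - V * Vᵀ) * (U * Uᵀ - V * Vᵀ)) := by
    rw [← trace_mul_transpose_self, hDt]
  have hUU : Matrix.trace ((U * Uᵀ) * (U * Uᵀ)) = (R : ℝ) := by
    have : (U * Uᵀ) * (U * Uᵀ) = U * Uᵀ := by
      calc (U * Uᵀ) * (U * Uᵀ) = U * ((Uᵀ * U) * Uᵀ) := by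
            simp only [Matrix.mul_assoc]
        _ = U * Uᵀ := by rw [hU, Matrix.one_mul]
    rw [this, Matrix.trace_mul_comm, hU, Matrix.trace_one]
    simp
  have hVV : Matrix.trace ((V * Vᵀ) * (V * Vᵀ)) = (R : ℝ) := by
    have : (V * Vᵀ) * (V * Vᵀ) = V * Vᵀ := by
      calc (V * Vᵀ) * (V * Vᵀ) = V * ((Vᵀ * V) * Vᵀ) := by
            simp only [Matrix.mul_assoc]
        _ = V * Vᵀ := by rw [hV, Matrix.one_mul]
    rw [this, Matrix.trace_mul_comm, hV, Matrix.trace_one]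
    simp
  have hUV : Matrix.trace ((U * Uᵀ) * (V * Vᵀ)) = ∑ i, ∑ j, ((Uᵀ * V) i j) ^ 2 := by
    calc Matrix.trace ((U * Uᵀ) * (V * Vᵀ))
        = Matrix.trace (U * (Uᵀ * (V * Vᵀ))) := by rw [Matrix.mul_assoc]
      _ = Matrix.trace ((Uᵀ * (V * Vᵀ)) * U) := Matrix.trace_mul_comm _ _
      _ = Matrix.trace ((Uᵀ * V) * (Vᵀ * U)) := by simp only [Matrix.mul_assoc]
      _ = Matrix.trace ((Uᵀ * V) * (Uᵀ * V)ᵀ) := by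
            rw [Matrix.transpose_mul, Matrix.transpose_transpose]
      _ = ∑ i, ∑ j, ((Uᵀ * V) i j) ^ 2 := trace_mul_transpose_self _
  have hVU : Matrix.trace ((V * Vᵀ) * (U * Uᵀ)) = ∑ i, ∑ j, ((Uᵀ * V) i j) ^ 2 := by
    rw [Matrix.trace_mul_comm]; exact hUV
  rw [h1, Matrix.sub_mul, Matrix.mul_sub, Matrix.mul_sub, Matrix.trace_sub, Matrix.trace_sub,
    Matrix.trace_sub, hUU, hVV, hUV, hVU]
  ring

/-- embedding of matrices into Euclidean space -/
def eM {p : ℕ} (M : Matrix (Fin p) (Fin p) ℝ) : EuclideanSpace ℝ (Fin p × Fin p) :=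
  (WithLp.equiv 2 (Fin p × Fin p → ℝ)).symm (fun ij => M ij.1 ij.2)

lemma eM_sub (A B : Matrix (Fin p) (Fin p) ℝ) : eM (A - B) = eM A - eM B := rfl

lemma eM_norm (M : Matrix (Fin p) (Fin p) ℝ) :
    ‖eM M‖ = Real.sqrt (∑ i, ∑ j, (M i j) ^ 2) := by
  rw [EuclideanSpace.norm_eq]
  congr 1
  rw [Fintype.sum_prod_type]
  apply Finset.sum_congr rfl
  intro i _
  apply Finset.sum_congr rfl
  intro j _
  have : eM M (i, j) = M i j := rfl
  rw [this, Real.norm_eq_abs, sq_abs]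

lemma sinThetaF_eq (U V : Matrix (Fin p) (Fin R) ℝ) (hU : Uᵀ * U = 1) (hV : Vᵀ * V = 1) :
    sinThetaF U V = ‖eM (U * Uᵀ - V * Vᵀ)‖ / Real.sqrt 2 := by
  have hq := frob_key U V hU hV
  have hnn : 0 ≤ ∑ i, ∑ j, ((U * Uᵀ - V * Vᵀ) i j) ^ 2 :=
    Finset.sum_nonneg fun i _ => Finset.sum_nonneg fun j _ => sq_nonneg _
  have hrt : (R : ℝ) - ∑ i, ∑ j, ((Uᵀ * V) i j) ^ 2
      = (∑ i, ∑ j, ((U * Uᵀ - V * Vᵀ) i j) ^ 2) / 2 := by linarith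
  unfold sinThetaF
  rw [hrt, eM_norm, ← Real.sqrt_div hnn]

lemma frobTriangle (V₁ V₂ V₃ : Matrix (Fin p) (Fin R) ℝ)
    (hV₁ : V₁ᵀ * V₁ = 1) (hV₂ : V₂ᵀ * V₂ = 1) (hV₃ : V₃ᵀ * V₃ = 1) :
    sinThetaF V₂ V₃ ≤ sinThetaF V₁ V₂ + sinThetaF V₁ V₃ := by
  rw [sinThetaF_eq V₂ V₃ hV₂ hV₃, sinThetaF_eq V₁ V₂ hV₁ hV₂, sinThetaF_eq V₁ V₃ hV₁ hV₃]
  rw [← add_div, div_le_div_iff_of_pos_right (by positivity : (0:ℝ) < Real.sqrt 2)]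
  have hdec : eM (V₂ * V₂ᵀ - V₃ * V₃ᵀ)
      = eM (V₁ * V₁ᵀ - V₃ * V₃ᵀ) - eM (V₁ * V₁ᵀ - V₂ * V₂ᵀ) := by
    rw [← eM_sub]
    congr 1
    abel
  rw [hdec]
  calc ‖eM (V₁ * V₁ᵀ - V₃ * V₃ᵀ) - eM (V₁ * V₁ᵀ - V₂ * V₂ᵀ)‖
      ≤ ‖eM (V₁ * V₁ᵀ - V₂ * V₂ᵀ)‖ + ‖eM (V₁ * V₁ᵀ - V₃ * V₃ᵀ)‖ := by
        rw [add_comm]; exact norm_sub_le _ _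
    _ = _ := rfl

end FrobPart

/-- Triangle inequality for the `sin Θ` distances, in operator norm and in Frobenius
norm, for `V₁, V₂, V₃ ∈ 𝕆_{p,R}`. -/
theorem sin_theta_triangle_inequality (p R : ℕ)
    (V₁ V₂ V₃ : Matrix (Fin p) (Fin R) ℝ)
    (hV₁ : V₁ᵀ * V₁ = 1) (hV₂ : V₂ᵀ * V₂ = 1) (hV₃ : V₃ᵀ * V₃ = 1) :
    sinThetaOp V₂ V₃ ≤ sinThetaOp V₁ V₂ + sinThetaOp V₁ V₃ ∧
    sinThetaF V₂ V₃ ≤ sinThetaF V₁ V₂ + sinThetaF V₁ V₃ := by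
  constructor
  · rcases Nat.eq_zero_or_pos R with hR | hR
    · subst hR
      have h : ∀ U V : Matrix (Fin p) (Fin 0) ℝ, sinThetaOp U V = 1 := by
        intro U V
        unfold sinThetaOp
        rw [sigmaMin_zero_of_R_eq_zero]
        norm_num
      rw [h, h, h]
      norm_num
    · exact opTriangle hR V₁ V₂ V₃ hV₁ hV₂ hV₃
  · exact frobTriangle V₁ V₂ V₃ hV₁ hV₂ hV₃
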